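/- Let (X,Y) be a general correlated source with finite alphabets 𝒳 and 𝒴, and for a real rate R define J^{(n)}(R) = max_{ρ∈[0,1]} { ρ·R − J_0^{(n)}(ρ) }. If R > H_sup(X|Y), then n·J^{(n)}(R) → ∞ as n → ∞. -/

import Mathlib

/-!
Fix `H_sup(X|Y) < α < R` and split each inner sum `∑ₓ P(x,y)^{1/(1+ρ)}` according to whether
the conditional self-information of `(x,y)` exceeds `nα`. On the typical part
`P(x,y) ≥ e^{-nα} P(y)`, which bounds its contribution by `e^{nρα} P(y)`; on the atypical part
Hölder's inequality bounds it by `|𝒳|^{nρ}` times its probability `εₙ → 0`. Hence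
`e^{n J₀⁽ⁿ⁾(ρ)} ≤ 2^ρ (e^{nρα} + |𝒳|^{nρ} εₙ)`, and the choice `ρ = c/n` gives
`n J⁽ⁿ⁾(R) ≥ cR - log (2 (e^{cα} + |𝒳|^c εₙ)) → c(R - α) - log 2`, which is arbitrarily large.
-/

open Real Filter
open scoped Classical

/-- `Pr[(1/n)·ln(1/P_{Xⁿ|Yⁿ}(Xⁿ|Yⁿ)) > α]` where
`P_{Xⁿ|Yⁿ}(xⁿ|yⁿ) = P_{XⁿYⁿ}(xⁿ,yⁿ)/P_{Yⁿ}(yⁿ)`. -/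
noncomputable def prCondSelfInfoGT {𝒳 𝒴 : Type*} [Fintype 𝒳] [Fintype 𝒴]
    (P : (n : ℕ) → (Fin n → 𝒳) → (Fin n → 𝒴) → ℝ) (α : ℝ) (n : ℕ) : ℝ :=
  ∑ x : Fin n → 𝒳, ∑ y : Fin n → 𝒴,
    if (1 / (n : ℝ)) * Real.log
        (1 / (P n x y / ∑ x' : Fin n → 𝒳, P n x' y)) > α
    then P n x y else 0

/-- The spectral conditional sup-entropy rate `H_sup(X|Y)`. -/
noncomputable def specCondSupEntropy {𝒳 𝒴 : Type*} [Fintype 𝒳] [Fintype 𝒴]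
    (P : (n : ℕ) → (Fin n → 𝒳) → (Fin n → 𝒴) → ℝ) : ℝ :=
  sInf {α : ℝ | Tendsto (fun n => prCondSelfInfoGT P α n) atTop (nhds 0)}

/-- The source Gallager function `J₀⁽ⁿ⁾(ρ)`. -/
noncomputable def gallagerJ0 {𝒳 𝒴 : Type*} [Fintype 𝒳] [Fintype 𝒴]
    (P : (n : ℕ) → (Fin n → 𝒳) → (Fin n → 𝒴) → ℝ) (n : ℕ) (ρ : ℝ) : ℝ :=
  (1 / (n : ℝ)) * Real.log
    (∑ y : Fin n → 𝒴, (∑ x : Fin n → 𝒳, P n x y ^ (1 / (1 + ρ))) ^ (1 + ρ))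

/-- The source error exponent `J⁽ⁿ⁾(R) = max_{ρ∈[0,1]} {ρR − J₀⁽ⁿ⁾(ρ)}`. -/
noncomputable def gallagerJ {𝒳 𝒴 : Type*} [Fintype 𝒳] [Fintype 𝒴]
    (P : (n : ℕ) → (Fin n → 𝒳) → (Fin n → 𝒴) → ℝ) (R : ℝ) (n : ℕ) : ℝ :=
  sSup {v : ℝ | ∃ ρ ∈ Set.Icc (0 : ℝ) 1, v = ρ * R - gallagerJ0 P n ρ}

open Finset

namespace Real

lemma sum_rpow_le_rpow_sum {ι : Type*} (s : Finset ι) {f : ι → ℝ} (hf : ∀ i ∈ s, 0 ≤ f i)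
    {p : ℝ} (hp : 1 ≤ p) : ∑ i ∈ s, f i ^ p ≤ (∑ i ∈ s, f i) ^ p := by
  induction s using Finset.induction_on with
  | empty => simp [zero_rpow (by linarith : p ≠ 0)]
  | insert a s ha ih =>
    have hs : ∀ i ∈ s, 0 ≤ f i := fun i hi => hf i (mem_insert_of_mem hi)
    rw [sum_insert ha, sum_insert ha]
    calc f a ^ p + ∑ i ∈ s, f i ^ p ≤ f a ^ p + (∑ i ∈ s, f i) ^ p := by gcongr; exact ih hs
      _ ≤ _ := add_rpow_le_rpow_add (hf a (mem_insert_self a s)) (sum_nonneg hs) hp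

lemma sum_le_rpow_sum_rpow_one_div {ι : Type*} (s : Finset ι) {f : ι → ℝ}
    (hf : ∀ i ∈ s, 0 ≤ f i) {p : ℝ} (hp : 1 ≤ p) :
    ∑ i ∈ s, f i ≤ (∑ i ∈ s, f i ^ (1 / p)) ^ p :=
  calc ∑ i ∈ s, f i = ∑ i ∈ s, (f i ^ (1 / p)) ^ p :=
        sum_congr rfl fun i hi => by rw [one_div, rpow_inv_rpow (hf i hi) (by positivity)]
    _ ≤ _ := sum_rpow_le_rpow_sum s (fun i hi => rpow_nonneg (hf i hi) _) hp

lemma sum_rpow_le_rpow_sub_one_mul_sum {ι : Type*} (s : Finset ι) {f : ι → ℝ}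
    (hf : ∀ i ∈ s, 0 ≤ f i) {r q : ℝ} (hr : 0 < r) (hrf : ∀ i ∈ s, f i ≠ 0 → r ≤ f i)
    (hq0 : 0 < q) (hq1 : q ≤ 1) :
    ∑ i ∈ s, f i ^ q ≤ r ^ (q - 1) * ∑ i ∈ s, f i := by
  rw [mul_sum]
  refine sum_le_sum fun i hi => ?_
  rcases (hf i hi).eq_or_lt with h0 | hpos
  · simp [← h0, zero_rpow hq0.ne']
  · calc f i ^ q = f i ^ (q - 1) * f i := by
          rw [rpow_sub_one hpos.ne', div_mul_cancel₀ _ hpos.ne']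
      _ ≤ r ^ (q - 1) * f i :=
        mul_le_mul_of_nonneg_right
          (rpow_le_rpow_of_nonpos hr (hrf i hi hpos.ne') (by linarith)) hpos.le

lemma rpow_add_le_mul_rpow_add_rpow {a b p : ℝ} (ha : 0 ≤ a) (hb : 0 ≤ b) (hp : 1 ≤ p) :
    (a + b) ^ p ≤ 2 ^ (p - 1) * (a ^ p + b ^ p) := by
  lift a to NNReal using ha
  lift b to NNReal using hb
  exact_mod_cast NNReal.rpow_add_le_mul_rpow_add_rpow a b hp

lemma rpow_sum_rpow_one_div_le_card_rpow_mul_sum {ι : Type*} (s : Finset ι) {f : ι → ℝ}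
    (hf : ∀ i ∈ s, 0 ≤ f i) {ρ : ℝ} (hρ : 0 ≤ ρ) :
    (∑ i ∈ s, f i ^ (1 / (1 + ρ))) ^ (1 + ρ) ≤ (#s : ℝ) ^ ρ * ∑ i ∈ s, f i := by
  calc (∑ i ∈ s, f i ^ (1 / (1 + ρ))) ^ (1 + ρ)
      ≤ (#s : ℝ) ^ (1 + ρ - 1) * ∑ i ∈ s, (f i ^ (1 / (1 + ρ))) ^ (1 + ρ) :=
        rpow_sum_le_const_mul_sum_rpow_of_nonneg _ (by linarith) fun i hi =>
          rpow_nonneg (hf i hi) _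
    _ = (#s : ℝ) ^ ρ * ∑ i ∈ s, f i := by
        rw [add_sub_cancel_left]
        congr 1
        exact sum_congr rfl fun i hi => by rw [one_div, rpow_inv_rpow (hf i hi) (by linarith)]

lemma rpow_sum_rpow_one_div_le_rpow_mul {ι : Type*} (s : Finset ι) {f : ι → ℝ}
    (hf : ∀ i ∈ s, 0 ≤ f i) {Q a ρ : ℝ} (hQ : 0 < Q) (hsQ : ∑ i ∈ s, f i ≤ Q) (ha : 0 < a)
    (hQa : ∀ i ∈ s, f i ≠ 0 → Q ≤ a * f i) (hρ : 0 ≤ ρ) :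
    (∑ i ∈ s, f i ^ (1 / (1 + ρ))) ^ (1 + ρ) ≤ a ^ ρ * Q := by
  have hsum : ∑ i ∈ s, f i ^ (1 / (1 + ρ)) ≤ (Q / a) ^ (1 / (1 + ρ) - 1) * Q :=
    (sum_rpow_le_rpow_sub_one_mul_sum s hf (div_pos hQ ha)
      (fun i hi hi0 => (div_le_iff₀' ha).2 (hQa i hi hi0)) (by positivity)
      ((div_le_one (by linarith)).2 (by linarith))).trans
      (mul_le_mul_of_nonneg_left hsQ (by positivity))
  calc (∑ i ∈ s, f i ^ (1 / (1 + ρ))) ^ (1 + ρ)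
      ≤ ((Q / a) ^ (1 / (1 + ρ) - 1) * Q) ^ (1 + ρ) :=
        rpow_le_rpow (sum_nonneg fun i hi => rpow_nonneg (hf i hi) _) hsum (by linarith)
    _ = a ^ ρ * Q := by
        rw [mul_rpow (by positivity) hQ.le, ← rpow_mul (by positivity),
          show (1 / (1 + ρ) - 1) * (1 + ρ) = -ρ by field_simp; ring, rpow_neg (by positivity),
          div_rpow hQ.le ha.le, rpow_add hQ, rpow_one]
        field_simp

lemma rpow_sum_rpow_le_mass_add_bad_mass {ι : Type*} [Fintype ι] {f : ι → ℝ} (hf : ∀ i, 0 ≤ f i)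
    (bad : ι → Prop) [DecidablePred bad] {a ρ : ℝ} (ha : 0 < a) (hρ : 0 ≤ ρ)
    (hgood : ∀ i, ¬ bad i → f i ≠ 0 → ∑ j, f j ≤ a * f i) :
    (∑ i, f i ^ (1 / (1 + ρ))) ^ (1 + ρ) ≤
      2 ^ ρ * (a ^ ρ * ∑ i, f i + Fintype.card ι ^ ρ * ∑ i, if bad i then f i else 0) := by
  rcases (sum_nonneg fun i _ => hf i : 0 ≤ ∑ i, f i).eq_or_lt with hQ | hQ
  · have hzero : ∀ i, f i = 0 := fun i =>
      (sum_eq_zero_iff_of_nonneg fun i _ => hf i).1 hQ.symm i (mem_univ i)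
    have hbad : 0 ≤ ∑ i, if bad i then f i else 0 :=
      sum_nonneg fun i _ => by split_ifs <;> simp [hf i]
    simp only [hzero, zero_rpow (by positivity : 1 / (1 + ρ) ≠ 0), sum_const_zero,
      zero_rpow (by linarith : 1 + ρ ≠ 0)]
    positivity
  set B := ∑ i ∈ univ.filter bad, f i ^ (1 / (1 + ρ))
  set G := ∑ i ∈ univ.filter (¬ bad ·), f i ^ (1 / (1 + ρ))
  have hB : B ^ (1 + ρ) ≤ Fintype.card ι ^ ρ * ∑ i, if bad i then f i else 0 := by
    rw [← sum_filter]
    refine (rpow_sum_rpow_one_div_le_card_rpow_mul_sum _ (fun i _ => hf i) hρ).trans ?_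
    gcongr
    · exact sum_nonneg fun i _ => hf i
    · exact_mod_cast card_filter_le _ _
  have hG : G ^ (1 + ρ) ≤ a ^ ρ * ∑ i, f i :=
    rpow_sum_rpow_one_div_le_rpow_mul _ (fun i _ => hf i) hQ
      (sum_le_sum_of_subset_of_nonneg (filter_subset _ _) fun i _ _ => hf i) ha
      (fun i hi => hgood i (mem_filter.1 hi).2) hρ
  calc (∑ i, f i ^ (1 / (1 + ρ))) ^ (1 + ρ) = (B + G) ^ (1 + ρ) := by
        rw [sum_filter_add_sum_filter_not]
    _ ≤ 2 ^ (1 + ρ - 1) * (B ^ (1 + ρ) + G ^ (1 + ρ)) :=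
        rpow_add_le_mul_rpow_add_rpow (sum_nonneg fun i _ => rpow_nonneg (hf i) _)
          (sum_nonneg fun i _ => rpow_nonneg (hf i) _) (by linarith)
    _ ≤ _ := by rw [add_sub_cancel_left, add_comm (B ^ _)]; gcongr

lemma one_div_mul_log_one_div_div_le_iff {n p q α : ℝ} (hn : 0 < n) (hp : 0 < p)
    (hq : 0 < q) : 1 / n * log (1 / (p / q)) ≤ α ↔ q ≤ exp (n * α) * p := by
  rw [one_div_div, one_div_mul_eq_div, div_le_iff₀ hn, log_le_iff_le_exp (div_pos hq hp),
    div_le_iff₀ hp, mul_comm α]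

end Real

section Source

variable {𝒳 𝒴 : Type*} [Fintype 𝒳] [Fintype 𝒴] {P : (n : ℕ) → (Fin n → 𝒳) → (Fin n → 𝒴) → ℝ}

lemma prCondSelfInfoGT_nonneg (hPnn : ∀ n x y, 0 ≤ P n x y) (α : ℝ) (n : ℕ) :
    0 ≤ prCondSelfInfoGT P α n :=
  sum_nonneg fun x _ => sum_nonneg fun y _ => by split_ifs <;> simp [hPnn n x y]

lemma prCondSelfInfoGT_le_pow (hPnn : ∀ n x y, 0 ≤ P n x y)
    (hP1 : ∀ n, ∑ x : Fin n → 𝒳, ∑ y : Fin n → 𝒴, P n x y = 1) (α : ℝ) {n : ℕ} (hn : 0 < n) :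
    prCondSelfInfoGT P α n ≤ (Fintype.card 𝒳 * exp (-α)) ^ n := by
  have hterm : ∀ x y, (if 1 / (n : ℝ) * log (1 / (P n x y / ∑ x', P n x' y)) > α
      then P n x y else 0) ≤ exp (-(n * α)) * ∑ x', P n x' y := by
    intro x y
    have hQ : 0 ≤ ∑ x', P n x' y := sum_nonneg fun x' _ => hPnn n x' y
    split_ifs with hbad
    · rcases (hPnn n x y).eq_or_lt with hP0 | hP0
      · rw [← hP0]; positivity
      · have hQ0 : 0 < ∑ x', P n x' y := hP0.trans_le (single_le_sum (fun x' _ => hPnn n x' y)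
          (mem_univ x))
        rw [gt_iff_lt, ← not_le, one_div_mul_log_one_div_div_le_iff (by positivity) hP0 hQ0,
          not_le, ← lt_div_iff₀' (exp_pos _), div_eq_inv_mul, ← exp_neg] at hbad
        exact hbad.le
    · positivity
  calc prCondSelfInfoGT P α n ≤ ∑ _x : Fin n → 𝒳, ∑ y, exp (-(n * α)) * ∑ x', P n x' y :=
        sum_le_sum fun x _ => sum_le_sum fun y _ => hterm x y
    _ = (Fintype.card 𝒳 * exp (-α)) ^ n := by
        rw [← mul_sum, sum_comm, hP1, sum_const, card_univ, Fintype.card_fun, Fintype.card_fin,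
          mul_pow, ← exp_nat_mul]
        simp [mul_neg]

lemma tendsto_prCondSelfInfoGT_card (hPnn : ∀ n x y, 0 ≤ P n x y)
    (hP1 : ∀ n, ∑ x : Fin n → 𝒳, ∑ y : Fin n → 𝒴, P n x y = 1) :
    Tendsto (prCondSelfInfoGT P (Fintype.card 𝒳 : ℝ)) atTop (nhds 0) := by
  set c : ℝ := (Fintype.card 𝒳 : ℝ)
  have hc1 : c * exp (-c) < 1 := by
    rw [exp_neg, ← div_eq_mul_inv, div_lt_one (exp_pos _)]
    linarith [add_one_le_exp c]
  exact tendsto_of_tendsto_of_tendsto_of_le_of_le' tendsto_const_nhds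
    (tendsto_pow_atTop_nhds_zero_of_lt_one (by positivity) hc1)
    (Eventually.of_forall (prCondSelfInfoGT_nonneg hPnn c))
    ((eventually_gt_atTop 0).mono fun n hn => prCondSelfInfoGT_le_pow hPnn hP1 c hn)

lemma exists_lt_tendsto_prCondSelfInfoGT (hPnn : ∀ n x y, 0 ≤ P n x y)
    (hP1 : ∀ n, ∑ x : Fin n → 𝒳, ∑ y : Fin n → 𝒴, P n x y = 1) {R : ℝ}
    (hR : specCondSupEntropy P < R) :
    ∃ α < R, Tendsto (prCondSelfInfoGT P α) atTop (nhds 0) := by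
  obtain ⟨α, hα, hαR⟩ := exists_lt_of_csInf_lt ⟨_, tendsto_prCondSelfInfoGT_card hPnn hP1⟩ hR
  exact ⟨α, hαR, hα⟩

noncomputable def gallagerSum (P : (n : ℕ) → (Fin n → 𝒳) → (Fin n → 𝒴) → ℝ) (n : ℕ) (ρ : ℝ) :
    ℝ :=
  ∑ y : Fin n → 𝒴, (∑ x : Fin n → 𝒳, P n x y ^ (1 / (1 + ρ))) ^ (1 + ρ)

lemma gallagerJ0_eq_log_gallagerSum (n : ℕ) (ρ : ℝ) :
    gallagerJ0 P n ρ = 1 / n * log (gallagerSum P n ρ) :=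
  rfl

lemma one_le_gallagerSum (hPnn : ∀ n x y, 0 ≤ P n x y)
    (hP1 : ∀ n, ∑ x : Fin n → 𝒳, ∑ y : Fin n → 𝒴, P n x y = 1) (n : ℕ) {ρ : ℝ} (hρ : 0 ≤ ρ) :
    1 ≤ gallagerSum P n ρ :=
  calc 1 = ∑ y : Fin n → 𝒴, ∑ x : Fin n → 𝒳, P n x y := by rw [sum_comm, hP1]
    _ ≤ gallagerSum P n ρ := sum_le_sum fun y _ =>
        sum_le_rpow_sum_rpow_one_div _ (fun x _ => hPnn n x y) (by linarith)

lemma sub_gallagerJ0_le_gallagerJ (hPnn : ∀ n x y, 0 ≤ P n x y)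
    (hP1 : ∀ n, ∑ x : Fin n → 𝒳, ∑ y : Fin n → 𝒴, P n x y = 1) (R : ℝ) (n : ℕ) {ρ : ℝ}
    (hρ : ρ ∈ Set.Icc (0 : ℝ) 1) : ρ * R - gallagerJ0 P n ρ ≤ gallagerJ P R n := by
  refine le_csSup ⟨|R|, ?_⟩ ⟨ρ, hρ, rfl⟩
  rintro _ ⟨ρ', hρ', rfl⟩
  have hJ0 : 0 ≤ gallagerJ0 P n ρ' :=
    mul_nonneg (by positivity) (log_nonneg (one_le_gallagerSum hPnn hP1 n hρ'.1))
  have hρR : ρ' * R ≤ |R| :=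
    calc ρ' * R ≤ ρ' * |R| := mul_le_mul_of_nonneg_left (le_abs_self R) hρ'.1
      _ ≤ |R| := mul_le_of_le_one_left (abs_nonneg R) hρ'.2
  linarith

lemma gallagerSum_le (hPnn : ∀ n x y, 0 ≤ P n x y)
    (hP1 : ∀ n, ∑ x : Fin n → 𝒳, ∑ y : Fin n → 𝒴, P n x y = 1) (α : ℝ) {n : ℕ} (hn : 0 < n)
    {ρ : ℝ} (hρ : 0 ≤ ρ) :
    gallagerSum P n ρ ≤
      2 ^ ρ * (exp (n * ρ * α) + Fintype.card 𝒳 ^ (n * ρ) * prCondSelfInfoGT P α n) := by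
  have hy (y : Fin n → 𝒴) := rpow_sum_rpow_le_mass_add_bad_mass (hPnn n · y)
    (fun x => 1 / (n : ℝ) * log (1 / (P n x y / ∑ x', P n x' y)) > α) (exp_pos (n * α)) hρ
    fun x hx hx0 => by
      have hP0 := (hPnn n x y).lt_of_ne' hx0
      exact (one_div_mul_log_one_div_div_le_iff (by positivity) hP0 (hP0.trans_le
        (single_le_sum (fun x' _ => hPnn n x' y) (mem_univ x)))).1 (not_lt.1 hx)
  calc gallagerSum P n ρ ≤ _ := sum_le_sum fun y _ => hy y
    _ = _ := by
      rw [← mul_sum, sum_add_distrib, ← mul_sum, ← mul_sum, sum_comm, hP1, prCondSelfInfoGT,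
        Fintype.card_fun, Fintype.card_fin, ← exp_mul, Nat.cast_pow, ← rpow_natCast_mul
        (Nat.cast_nonneg _), mul_one, mul_right_comm]
      conv_rhs => rw [sum_comm]

lemma sub_log_le_mul_gallagerJ (hPnn : ∀ n x y, 0 ≤ P n x y)
    (hP1 : ∀ n, ∑ x : Fin n → 𝒳, ∑ y : Fin n → 𝒴, P n x y = 1) (R α : ℝ) {n : ℕ} (hn : 0 < n)
    {c : ℝ} (hc : 0 ≤ c) (hcn : c ≤ n) :
    c * R - log (2 * (exp (c * α) + Fintype.card 𝒳 ^ c * prCondSelfInfoGT P α n)) ≤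
      n * gallagerJ P R n := by
  have hn' : (0 : ℝ) < n := by exact_mod_cast hn
  set ρ := c / n
  have hρ : ρ ∈ Set.Icc (0 : ℝ) 1 := ⟨div_nonneg hc hn'.le, (div_le_one hn').2 hcn⟩
  have hnρ : (n : ℝ) * ρ = c := mul_div_cancel₀ c hn'.ne'
  have hS := gallagerSum_le hPnn hP1 α hn hρ.1
  rw [hnρ] at hS
  have h2 : (2 : ℝ) ^ ρ ≤ 2 := by simpa using rpow_le_rpow_of_exponent_le one_le_two hρ.2
  calc c * R - log (2 * (exp (c * α) + Fintype.card 𝒳 ^ c * prCondSelfInfoGT P α n))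
      ≤ c * R - log (gallagerSum P n ρ) := by
        gcongr
        · exact zero_lt_one.trans_le (one_le_gallagerSum hPnn hP1 n hρ.1)
        · refine hS.trans (mul_le_mul_of_nonneg_right h2 ?_)
          have := prCondSelfInfoGT_nonneg hPnn α n
          positivity
    _ = n * (ρ * R - gallagerJ0 P n ρ) := by
        rw [gallagerJ0_eq_log_gallagerSum, mul_sub, ← mul_assoc, hnρ, ← mul_assoc,
          mul_one_div_cancel hn'.ne', one_mul]
    _ ≤ n * gallagerJ P R n := by
        gcongr
        exact sub_gallagerJ0_le_gallagerJ hPnn hP1 R n hρ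

lemma eventually_lt_mul_gallagerJ (hPnn : ∀ n x y, 0 ≤ P n x y)
    (hP1 : ∀ n, ∑ x : Fin n → 𝒳, ∑ y : Fin n → 𝒴, P n x y = 1) {R α : ℝ}
    (hα : Tendsto (prCondSelfInfoGT P α) atTop (nhds 0)) {c M : ℝ} (hc : 0 ≤ c)
    (hM : M < c * (R - α) - log 2) :
    ∀ᶠ n : ℕ in atTop, M < n * gallagerJ P R n := by
  have hlim : Tendsto (fun n => c * R -
      log (2 * (exp (c * α) + Fintype.card 𝒳 ^ c * prCondSelfInfoGT P α n)))
      atTop (nhds (c * (R - α) - log 2)) := by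
    have h := (((hα.const_mul ((Fintype.card 𝒳 : ℝ) ^ c)).const_add
      (exp (c * α))).const_mul 2).log (by positivity)
    convert h.const_sub (c * R) using 2
    rw [mul_zero, add_zero, log_mul two_ne_zero (exp_pos _).ne', log_exp]
    ring
  filter_upwards [hlim.eventually (lt_mem_nhds hM), eventually_gt_atTop 0,
    eventually_ge_atTop ⌈c⌉₊] with n hMn hn hcn
  exact hMn.trans_le (sub_log_le_mul_gallagerJ hPnn hP1 R α hn hc (Nat.ceil_le.1 hcn))

end Source

theorem gallager_source_exponent_tendsto_atTop_general
    {𝒳 𝒴 : Type*} [Fintype 𝒳] [Fintype 𝒴]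
    (P : (n : ℕ) → (Fin n → 𝒳) → (Fin n → 𝒴) → ℝ)
    (hPnn : ∀ n x y, 0 ≤ P n x y)
    (hP1 : ∀ n, ∑ x : Fin n → 𝒳, ∑ y : Fin n → 𝒴, P n x y = 1)
    (R : ℝ) (hR : specCondSupEntropy P < R) :
    Tendsto (fun n : ℕ => (n : ℝ) * gallagerJ P R n) atTop atTop := by
  obtain ⟨α, hαR, hα⟩ := exists_lt_tendsto_prCondSelfInfoGT hPnn hP1 hR
  have hlin : Tendsto (fun c => c * (R - α) - log 2) atTop atTop :=
    tendsto_atTop_add_const_right _ _ (tendsto_id.atTop_mul_const (sub_pos.2 hαR))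
  refine tendsto_atTop.2 fun M => ?_
  obtain ⟨c, hc, hcM⟩ := ((eventually_ge_atTop 0).and (hlin.eventually_gt_atTop M)).exists
  exact (eventually_lt_mul_gallagerJ hPnn hP1 hα hc hcM).mono fun n hn => hn.le

theorem gallager_source_exponent_tendsto_atTop
    {𝒳 𝒴 : Type*} [Fintype 𝒳] [Fintype 𝒴] [Nonempty 𝒳] [Nonempty 𝒴]
    (P : (n : ℕ) → (Fin n → 𝒳) → (Fin n → 𝒴) → ℝ)
    (hPnn : ∀ n x y, 0 ≤ P n x y)
    (hP1 : ∀ n, ∑ x : Fin n → 𝒳, ∑ y : Fin n → 𝒴, P n x y = 1)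
    (R : ℝ) (hR : specCondSupEntropy P < R) :
    Tendsto (fun n : ℕ => (n : ℝ) * gallagerJ P R n) atTop atTop :=
  gallager_source_exponent_tendsto_atTop_general P hPnn hP1 R hR
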